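/- Let ρ ∈ ℝᴺ with ρₖ > 0, μ₁ = (1/N)Σρₖ, μ₃ = (1/N)Σ(1/ρₖ), τ, ε > 0, and suppose A = D(ρ) + τ·P + τε·Δ_h D(ρ)⁻¹ Δ_h and B = μ₁I + τ·P + τε·μ₃·Δ_h², where P is symmetric positive semidefinite and Δ_h symmetric. Then for all z ≠ 0, min(min_k ρ_k/μ₁, min_k (1/ρ_k)/μ₃) ≤ zᵀAz/zᵀBz ≤ max(max_k ρ_k/μ₁, max_k (1/ρ_k)/μ₃). -/

import Mathlib

/-!
Write `S(c, s, d, e) = diag d + c P + s Δ diag(e) Δ` (`stageMatrix`), so that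
`A = S(τ, τε, ρ, 1/ρ)` and `B = S(τ, τε, μ₁, μ₃)`. For fixed `c, s ≥ 0` this is linear in `(d, e)`
and positive semidefinite when `d, e ≥ 0`. Hence `A - r B = S((1 - r) τ, τε, ρ - r μ₁, 1/ρ - r μ₃)`
is positive semidefinite as soon as `r ≤ 1`, `r μ₁ ≤ min ρ` and `r μ₃ ≤ min (1/ρ)`, which gives
`r ≤ zᵀAz / zᵀBz`. The minimum of the two ratios meets all three conditions (`r ≤ 1` because
`min ρ ≤ μ₁`); the upper bound is symmetric.
-/

open Matrix

section Average

variable {ι : Type*} [Fintype ι]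

theorem mul_le_of_le_ciInf_div {f : ι → ℝ} {r μ : ℝ} (hμ : 0 < μ) (hr : r ≤ (⨅ i, f i) / μ)
    (i : ι) : r * μ ≤ f i :=
  ((le_div_iff₀ hμ).1 hr).trans (ciInf_le (Finite.bddBelow_range f) i)

theorem le_mul_of_ciSup_div_le {f : ι → ℝ} {r μ : ℝ} (hμ : 0 < μ) (hr : (⨆ i, f i) / μ ≤ r)
    (i : ι) : f i ≤ r * μ :=
  (le_ciSup (Finite.bddAbove_range f) i).trans ((div_le_iff₀ hμ).1 hr)

variable [Nonempty ι]

theorem ciInf_le_sum_div_card (f : ι → ℝ) : ⨅ i, f i ≤ (∑ i, f i) / Fintype.card ι := by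
  rw [le_div_iff₀ (by exact_mod_cast Fintype.card_pos), mul_comm, ← nsmul_eq_mul]
  exact Finset.card_nsmul_le_sum _ _ _ fun i _ => ciInf_le (Finite.bddBelow_range f) i

theorem sum_div_card_le_ciSup (f : ι → ℝ) : (∑ i, f i) / Fintype.card ι ≤ ⨆ i, f i := by
  rw [div_le_iff₀ (by exact_mod_cast Fintype.card_pos), mul_comm, ← nsmul_eq_mul]
  exact Finset.sum_le_card_nsmul _ _ _ fun i _ => le_ciSup (Finite.bddAbove_range f) i

theorem ciInf_pos_of_finite {f : ι → ℝ} (hf : ∀ i, 0 < f i) : 0 < ⨅ i, f i :=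
  let ⟨i, hi⟩ := exists_eq_ciInf_of_finite (f := f); hi ▸ hf i

end Average

section Rayleigh

variable {n : Type*} [Fintype n] {A B : Matrix n n ℝ} {z : n → ℝ} {r : ℝ}

theorem le_div_dotProduct_mulVec_of_posSemidef_sub (hB : B.PosDef)
    (h : (A - r • B).PosSemidef) (hz : z ≠ 0) :
    r ≤ (z ⬝ᵥ A *ᵥ z) / (z ⬝ᵥ B *ᵥ z) := by
  have hBz : 0 < z ⬝ᵥ B *ᵥ z := by simpa using hB.dotProduct_mulVec_pos hz
  have hgap : 0 ≤ z ⬝ᵥ (A - r • B) *ᵥ z := by simpa using h.dotProduct_mulVec_nonneg z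
  rw [le_div_iff₀ hBz]
  simpa [sub_mulVec, smul_mulVec, dotProduct_sub, mul_comm] using hgap

theorem div_dotProduct_mulVec_le_of_posSemidef_sub (hB : B.PosDef)
    (h : (r • B - A).PosSemidef) (hz : z ≠ 0) :
    (z ⬝ᵥ A *ᵥ z) / (z ⬝ᵥ B *ᵥ z) ≤ r := by
  have hBz : 0 < z ⬝ᵥ B *ᵥ z := by simpa using hB.dotProduct_mulVec_pos hz
  have hgap : 0 ≤ z ⬝ᵥ (r • B - A) *ᵥ z := by simpa using h.dotProduct_mulVec_nonneg z
  rw [div_le_iff₀ hBz]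
  simpa [sub_mulVec, smul_mulVec, dotProduct_sub, mul_comm] using hgap

end Rayleigh

section StageMatrix

variable {n : Type*} [Fintype n] [DecidableEq n] (P Δ : Matrix n n ℝ)

def stageMatrix (c s : ℝ) (d e : n → ℝ) : Matrix n n ℝ :=
  diagonal d + c • P + s • (Δ * diagonal e * Δ)

variable {P Δ}

theorem smul_stageMatrix_sub_smul (a b c s : ℝ) (d d' e e' : n → ℝ) :
    a • stageMatrix P Δ c s d e - b • stageMatrix P Δ c s d' e' =
      stageMatrix P Δ ((a - b) * c) s (a • d - b • d') (a • e - b • e') := by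
  have diagonal_sub' (f g : n → ℝ) : diagonal (f - g) = diagonal f - diagonal g :=
    (diagonal_sub f g).symm
  simp only [stageMatrix, diagonal_sub', diagonal_smul, Matrix.mul_sub,
    Matrix.mul_smul, Matrix.smul_mul, smul_add, smul_sub, smul_comm a s, smul_comm b s,
    sub_mul, sub_smul, mul_smul]
  abel

theorem posSemidef_mul_diagonal_mul_self (hΔ : Δᵀ = Δ) {e : n → ℝ} (he : 0 ≤ e) :
    (Δ * diagonal e * Δ).PosSemidef := by
  simpa [conjTranspose_eq_transpose_of_trivial, hΔ] using
    (PosSemidef.diagonal he).conjTranspose_mul_mul_same Δ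

theorem posSemidef_stageMatrix (hP : P.PosSemidef) (hΔ : Δᵀ = Δ) {c s : ℝ} {d e : n → ℝ}
    (hc : 0 ≤ c) (hs : 0 ≤ s) (hd : 0 ≤ d) (he : 0 ≤ e) :
    (stageMatrix P Δ c s d e).PosSemidef :=
  ((PosSemidef.diagonal hd).add (hP.smul hc)).add
    ((posSemidef_mul_diagonal_mul_self hΔ he).smul hs)

theorem posDef_stageMatrix (hP : P.PosSemidef) (hΔ : Δᵀ = Δ) {c s : ℝ} {d e : n → ℝ}
    (hc : 0 ≤ c) (hs : 0 ≤ s) (hd : ∀ k, 0 < d k) (he : 0 ≤ e) :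
    (stageMatrix P Δ c s d e).PosDef := by
  rw [stageMatrix, add_assoc]
  exact (PosDef.diagonal hd).add_posSemidef
    ((hP.smul hc).add ((posSemidef_mul_diagonal_mul_self hΔ he).smul hs))

theorem posSemidef_stageMatrix_sub_smul (hP : P.PosSemidef) (hΔ : Δᵀ = Δ)
    {c s r : ℝ} {d d' e e' : n → ℝ} (hc : 0 ≤ c) (hs : 0 ≤ s) (hr : r ≤ 1)
    (hd : r • d' ≤ d) (he : r • e' ≤ e) :
    (stageMatrix P Δ c s d e - r • stageMatrix P Δ c s d' e').PosSemidef := by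
  have h := posSemidef_stageMatrix hP hΔ (mul_nonneg (sub_nonneg.2 hr) hc) hs
    (sub_nonneg.2 hd) (sub_nonneg.2 he)
  rwa [← one_smul ℝ d, ← one_smul ℝ e, ← smul_stageMatrix_sub_smul, one_smul] at h

theorem posSemidef_smul_stageMatrix_sub (hP : P.PosSemidef) (hΔ : Δᵀ = Δ)
    {c s r : ℝ} {d d' e e' : n → ℝ} (hc : 0 ≤ c) (hs : 0 ≤ s) (hr : 1 ≤ r)
    (hd : d ≤ r • d') (he : e ≤ r • e') :
    (r • stageMatrix P Δ c s d' e' - stageMatrix P Δ c s d e).PosSemidef := by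
  have h := posSemidef_stageMatrix hP hΔ (mul_nonneg (sub_nonneg.2 hr) hc) hs
    (sub_nonneg.2 hd) (sub_nonneg.2 he)
  rwa [← one_smul ℝ d, ← one_smul ℝ e, ← smul_stageMatrix_sub_smul, one_smul] at h

end StageMatrix

theorem preconditioner_rayleigh_bounds_general (N : ℕ)
    (ρ : Fin N → ℝ) (hρ : ∀ k, 0 < ρ k)
    (μ₁ μ₃ : ℝ) (hμ₁ : μ₁ = (∑ k, ρ k) / N) (hμ₃ : μ₃ = (∑ k, (ρ k)⁻¹) / N)
    (τ ε : ℝ) (hτ : 0 < τ) (hε : 0 < ε)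
    (P : Matrix (Fin N) (Fin N) ℝ) (hP : P.PosSemidef)
    (Δh : Matrix (Fin N) (Fin N) ℝ) (hΔhSymm : Δhᵀ = Δh)
    (A B : Matrix (Fin N) (Fin N) ℝ)
    (hA : A = Matrix.diagonal ρ + τ • P
      + (τ * ε) • (Δh * Matrix.diagonal (fun k => (ρ k)⁻¹) * Δh))
    (hB : B = μ₁ • (1 : Matrix (Fin N) (Fin N) ℝ) + τ • P + (τ * ε * μ₃) • (Δh * Δh)) :
    ∀ z : Fin N → ℝ, z ≠ 0 →
      min ((⨅ k, ρ k) / μ₁) ((⨅ k, (ρ k)⁻¹) / μ₃) ≤ (z ⬝ᵥ A *ᵥ z) / (z ⬝ᵥ B *ᵥ z) ∧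
      (z ⬝ᵥ A *ᵥ z) / (z ⬝ᵥ B *ᵥ z) ≤ max ((⨆ k, ρ k) / μ₁) ((⨆ k, (ρ k)⁻¹) / μ₃) := by
  intro z hz
  have : Nonempty (Fin N) := let ⟨k, _⟩ := Function.ne_iff.mp hz; ⟨k⟩
  have hB' : B = stageMatrix P Δh τ (τ * ε) (fun _ => μ₁) (fun _ => μ₃) := by
    rw [hB, stageMatrix, ← smul_one_eq_diagonal, ← smul_one_eq_diagonal, Matrix.mul_smul,
      Matrix.mul_one, Matrix.smul_mul, smul_smul]
  have hμ₁min : ⨅ k, ρ k ≤ μ₁ := by simpa [hμ₁] using ciInf_le_sum_div_card ρ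
  have hμ₁max : μ₁ ≤ ⨆ k, ρ k := by simpa [hμ₁] using sum_div_card_le_ciSup ρ
  have hμ₃min : ⨅ k, (ρ k)⁻¹ ≤ μ₃ := by
    simpa [hμ₃] using ciInf_le_sum_div_card (fun k => (ρ k)⁻¹)
  have hμ₁pos : 0 < μ₁ := (ciInf_pos_of_finite hρ).trans_le hμ₁min
  have hμ₃pos : 0 < μ₃ := (ciInf_pos_of_finite fun k => inv_pos.2 (hρ k)).trans_le hμ₃min
  have hBpos : B.PosDef := hB' ▸ posDef_stageMatrix hP hΔhSymm hτ.le (by positivity)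
    (fun _ => hμ₁pos) (fun _ => hμ₃pos.le)
  refine ⟨le_div_dotProduct_mulVec_of_posSemidef_sub hBpos ?_ hz,
    div_dotProduct_mulVec_le_of_posSemidef_sub hBpos ?_ hz⟩ <;> rw [hA, hB']
  · exact posSemidef_stageMatrix_sub_smul hP hΔhSymm hτ.le (by positivity)
      ((min_le_left _ _).trans ((div_le_one hμ₁pos).2 hμ₁min))
      (mul_le_of_le_ciInf_div hμ₁pos (min_le_left _ _))
      (mul_le_of_le_ciInf_div hμ₃pos (min_le_right _ _))
  · exact posSemidef_smul_stageMatrix_sub hP hΔhSymm hτ.le (by positivity)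
      (((one_le_div hμ₁pos).2 hμ₁max).trans (le_max_left _ _))
      (le_mul_of_ciSup_div_le hμ₁pos (le_max_left _ _))
      (le_mul_of_ciSup_div_le hμ₃pos (le_max_right _ _))

theorem preconditioner_rayleigh_bounds (N : ℕ) (hN : 0 < N)
    (ρ : Fin N → ℝ) (hρ : ∀ k, 0 < ρ k)
    (μ₁ μ₃ : ℝ) (hμ₁ : μ₁ = (∑ k, ρ k) / N) (hμ₃ : μ₃ = (∑ k, (ρ k)⁻¹) / N)
    (τ ε : ℝ) (hτ : 0 < τ) (hε : 0 < ε)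
    (P : Matrix (Fin N) (Fin N) ℝ) (hP : P.PosSemidef)
    (Δh : Matrix (Fin N) (Fin N) ℝ) (hΔhSymm : Δhᵀ = Δh)
    (A B : Matrix (Fin N) (Fin N) ℝ)
    (hA : A = Matrix.diagonal ρ + τ • P
      + (τ * ε) • (Δh * Matrix.diagonal (fun k => (ρ k)⁻¹) * Δh))
    (hB : B = μ₁ • (1 : Matrix (Fin N) (Fin N) ℝ) + τ • P + (τ * ε * μ₃) • (Δh * Δh)) :
    ∀ z : Fin N → ℝ, z ≠ 0 →
      min ((⨅ k, ρ k) / μ₁) ((⨅ k, (ρ k)⁻¹) / μ₃) ≤ (z ⬝ᵥ A *ᵥ z) / (z ⬝ᵥ B *ᵥ z) ∧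
      (z ⬝ᵥ A *ᵥ z) / (z ⬝ᵥ B *ᵥ z) ≤ max ((⨆ k, ρ k) / μ₁) ((⨆ k, (ρ k)⁻¹) / μ₃) :=
  preconditioner_rayleigh_bounds_general N ρ hρ μ₁ μ₃ hμ₁ hμ₃ τ ε hτ hε P hP Δh hΔhSymm A B hA hB
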